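/- For simple motions with a target moving along a v-Lipschitz trajectory y_T (v < 1), the fixed-point iteration t₀ = 0, t_n = (‖y_T(t_{n−1})‖ + v·t_{n−1} − ℓ)/(1+v) when ‖y_T(t_{n−1})‖ > t_{n−1} + ℓ, else t_n = t_{n−1}, converges monotonically to T*[y_T] = min{t ≥ 0 : ‖y_T(t)‖ ≤ t + ℓ}, which is finite since v < 1. -/

import Mathlib

open Filter Function Set Topology

/-!
The iteration map `s ↦ s + max (‖y_T s‖ - s - ℓ) 0 / (1 + v)` never decreases `s`, and its fixed
points are exactly the admissible times `‖y_T s‖ ≤ s + ℓ`. Because `‖y_T‖` is `v`-Lipschitz, the map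
also sends every time below an admissible time `u` to a time below `u`. Hence the orbit of `0` is
nondecreasing and bounded by every admissible time (one exists since `v < 1`); its limit is a fixed
point by continuity, i.e. the least admissible time.
-/

theorem isFixedPt_of_tendsto_of_continuousWithinAt {α : Type*} [TopologicalSpace α] [T2Space α]
    {f : α → α} {s : Set α} {t : ℕ → α} {y : α} (hf : ContinuousWithinAt f s y)
    (hts : ∀ n, t n ∈ s) (hstep : ∀ n, t (n + 1) = f (t n)) (hy : Tendsto t atTop (𝓝 y)) :
    IsFixedPt f y := by
  refine tendsto_nhds_unique ?_ ((tendsto_add_atTop_iff_nat 1).2 hy)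
  simp only [hstep]
  exact hf.tendsto.comp (tendsto_nhdsWithin_iff.2 ⟨hy, .of_forall hts⟩)

namespace Interception

variable {r : ℝ → ℝ} {v ℓ : ℝ}

theorem le_add_mul_sub (hr : LipschitzOnWith (Real.toNNReal v) r (Ici 0)) (hv : 0 ≤ v)
    {a b : ℝ} (ha : 0 ≤ a) (hab : a ≤ b) : r a ≤ r b + v * (b - a) := by
  have h := hr.le_add_mul (mem_Ici.2 ha) (mem_Ici.2 (ha.trans hab))
  rwa [Real.coe_toNNReal v hv, Real.dist_eq, abs_of_nonpos (sub_nonpos.2 hab), neg_sub] at h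

theorem exists_le_add (hr : LipschitzOnWith (Real.toNNReal v) r (Ici 0)) (hv : 0 ≤ v)
    (hv1 : v < 1) : ∃ s, 0 ≤ s ∧ r s ≤ s + ℓ := by
  set s := max 0 ((r 0 - ℓ) / (1 - v))
  have hs : 0 ≤ s := le_max_left _ _
  have hgap : r 0 - ℓ ≤ (1 - v) * s := by
    rw [← div_le_iff₀' (sub_pos.2 hv1)]
    exact le_max_right _ _
  have hdrift : r s ≤ r 0 + v * s := by
    have h := hr.le_add_mul (mem_Ici.2 hs) (mem_Ici.2 le_rfl)
    rwa [Real.coe_toNNReal v hv, Real.dist_eq, sub_zero, abs_of_nonneg hs] at h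
  exact ⟨s, hs, by linarith⟩

/-- `r` plays the role of `‖y_T ·‖`. -/
noncomputable def step (r : ℝ → ℝ) (v ℓ s : ℝ) : ℝ :=
  if s + ℓ < r s then (r s + v * s - ℓ) / (1 + v) else s

theorem step_eq_add_max (hv : 0 < 1 + v) (s : ℝ) :
    step r v ℓ s = s + max (r s - s - ℓ) 0 / (1 + v) := by
  unfold step
  split_ifs with h
  · rw [max_eq_left (by linarith)]
    field_simp
    ring
  · rw [max_eq_right (by linarith), zero_div, add_zero]

theorem le_step (hv : 0 < 1 + v) (s : ℝ) : s ≤ step r v ℓ s := by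
  rw [step_eq_add_max hv]
  have : 0 ≤ max (r s - s - ℓ) 0 := le_max_right _ _
  have : 0 ≤ max (r s - s - ℓ) 0 / (1 + v) := by positivity
  linarith

theorem isFixedPt_step_iff (hv : 0 < 1 + v) {s : ℝ} :
    IsFixedPt (step r v ℓ) s ↔ r s ≤ s + ℓ := by
  rw [IsFixedPt, step_eq_add_max hv, add_eq_left, div_eq_zero_iff, max_eq_right_iff]
  constructor
  · rintro (h | h) <;> linarith
  · intro h
    exact .inl (by linarith)

theorem step_le (hr : LipschitzOnWith (Real.toNNReal v) r (Ici 0)) (hv : 0 ≤ v)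
    {a u : ℝ} (ha : 0 ≤ a) (hau : a ≤ u) (hu : r u ≤ u + ℓ) : step r v ℓ a ≤ u := by
  unfold step
  split_ifs
  · rw [div_le_iff₀ (by linarith)]
    linarith [le_add_mul_sub hr hv ha hau]
  · exact hau

theorem continuousOn_step (hr : LipschitzOnWith (Real.toNNReal v) r (Ici 0)) (hv : 0 ≤ v) :
    ContinuousOn (step r v ℓ) (Ici 0) := by
  rw [funext (step_eq_add_max (by linarith))]
  have hrc := hr.continuousOn
  fun_prop

end Interception

open Interception in
theorem simple_motions_iteration_converges_general (ℓ v : ℝ) (hv : 0 ≤ v) (hv1 : v < 1)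
    (yT : ℝ → EuclideanSpace ℝ (Fin 2))
    (hyT : LipschitzOnWith (Real.toNNReal v) yT (Set.Ici (0 : ℝ)))
    (t : ℕ → ℝ) (ht0 : t 0 = 0)
    (hiter : ∀ n : ℕ, t (n + 1) =
      if t n + ℓ < ‖yT (t n)‖ then (‖yT (t n)‖ + v * t n - ℓ) / (1 + v) else t n) :
    ∃ Tstar : ℝ, IsLeast {s : ℝ | 0 ≤ s ∧ ‖yT s‖ ≤ s + ℓ} Tstar ∧
      Monotone t ∧ Tendsto t atTop (nhds Tstar) := by
  have hr : LipschitzOnWith (Real.toNNReal v) (‖yT ·‖) (Ici 0) := by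
    simpa only [one_mul, comp_def] using lipschitzWith_one_norm.comp_lipschitzOnWith hyT
  have hv' : 0 < 1 + v := by linarith
  have hstep : ∀ n, t (n + 1) = step (‖yT ·‖) v ℓ (t n) := hiter
  have hmono : Monotone t := monotone_nat_of_le_succ fun n => (hstep n).symm ▸ le_step hv' _
  have hnonneg : ∀ n, 0 ≤ t n := fun n => ht0 ▸ hmono n.zero_le
  have hbound : ∀ u ∈ {s : ℝ | 0 ≤ s ∧ ‖yT s‖ ≤ s + ℓ}, ∀ n, t n ≤ u := by
    rintro u ⟨hu0, hu⟩ n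
    induction n with
    | zero => rwa [ht0]
    | succ n ih => exact (hstep n).symm ▸ step_le hr hv (hnonneg n) ih hu
  obtain ⟨u, hu⟩ := exists_le_add (ℓ := ℓ) hr hv hv1
  have hL := tendsto_atTop_ciSup hmono ⟨u, forall_mem_range.2 (hbound u hu)⟩
  have hL0 : 0 ≤ ⨆ n, t n := ge_of_tendsto' hL hnonneg
  have hfix := isFixedPt_of_tendsto_of_continuousWithinAt
    (continuousOn_step hr hv _ hL0) hnonneg hstep hL
  exact ⟨_, ⟨⟨hL0, (isFixedPt_step_iff hv').1 hfix⟩, fun u hu => le_of_tendsto' hL (hbound u hu)⟩,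
    hmono, hL⟩

/-- for simple motions in the plane with a `v`-Lipschitz target, `v < 1`,
the fixed-point iteration converges monotonically to the minimal interception time
`T* = min{t ≥ 0 : ‖y_T(t)‖ ≤ t + ℓ}`, which is finite. -/
theorem simple_motions_iteration_converges (ℓ v : ℝ) (hℓ : 0 ≤ ℓ) (hv : 0 ≤ v) (hv1 : v < 1)
    (yT : ℝ → EuclideanSpace ℝ (Fin 2))
    (hyT : LipschitzOnWith (Real.toNNReal v) yT (Set.Ici (0 : ℝ)))
    (t : ℕ → ℝ) (ht0 : t 0 = 0)
    (hiter : ∀ n : ℕ, t (n + 1) =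
      if t n + ℓ < ‖yT (t n)‖ then (‖yT (t n)‖ + v * t n - ℓ) / (1 + v) else t n) :
    ∃ Tstar : ℝ, IsLeast {s : ℝ | 0 ≤ s ∧ ‖yT s‖ ≤ s + ℓ} Tstar ∧
      Monotone t ∧ Tendsto t atTop (nhds Tstar) :=
  simple_motions_iteration_converges_general ℓ v hv hv1 yT hyT t ht0 hiter
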